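/- If Γ and Δ are finitely generated marked groups, then χ_B(G(Γ*Δ, ℕ)) ≤ χ_B(G(Γ, ℕ)) · χ_B(G(Δ, ℕ)). -/
import Mathlib


/-- The left shift action of a group `G` on the product space `G → X`:
`(γ • y) β = y (γ⁻¹ * β)`. -/
def shift {G : Type*} [Group G] {X : Type*} (γ : G) (y : G → X) : G → X :=
  fun β => y (γ⁻¹ * β)

/-- The free part `Free(X^G)` of the left shift action of `G` on `G → X`. -/
def freePart (G : Type*) [Group G] (X : Type*) : Set (G → X) :=
  {y | ∀ γ : G, γ ≠ 1 → shift γ y ≠ y}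

/-- The Borel chromatic number of a (graph given by a) relation `G` on a measurable
space `X`: the least cardinality of a standard Borel space `Y` admitting a Borel
(measurable) coloring `c : X → Y` with `c x ≠ c y` whenever `G x y`. -/
noncomputable def borelChromaticNumber {X : Type} [mX : MeasurableSpace X]
    (G : X → X → Prop) : Cardinal :=
  sInf {κ : Cardinal | ∃ (Y : Type) (mY : MeasurableSpace Y),
    @StandardBorelSpace Y mY ∧ Cardinal.mk Y = κ ∧
    ∃ c : X → Y, @Measurable X Y mX mY c ∧ ∀ x y, G x y → c x ≠ c y}

/-- The adjacency relation of the graph `G(Γ, X)` on the free part `Free(X^Γ)` determined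
by a set `S` of generators of `Γ`: `x` and `y` are adjacent iff some `γ ∈ S` shifts `x`
to `y` or `y` to `x`. -/
def cayleyAdj {Γ : Type} [Group Γ] (S : Set Γ) (X : Type) :
    ↥(freePart Γ X) → ↥(freePart Γ X) → Prop :=
  fun x y => ∃ γ ∈ S,
    shift γ (x : Γ → X) = (y : Γ → X) ∨ shift γ (y : Γ → X) = (x : Γ → X)


namespace BCN

open Function

variable {G : Type*} [Group G] {X : Type*}

theorem shift_apply (γ : G) (y : G → X) (β : G) : shift γ y β = y (γ⁻¹ * β) := rfl

theorem shift_shift (γ δ : G) (y : G → X) : shift γ (shift δ y) = shift (γ * δ) y := by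
  funext β; simp [shift, mul_assoc]

theorem shift_one (y : G → X) : shift (1 : G) y = y := by funext β; simp [shift]

theorem shift_mem_freePart {y : G → X} (hy : y ∈ freePart G X) (δ : G) :
    shift δ y ∈ freePart G X := by
  intro γ hγ h
  have h2 : shift (δ⁻¹ * γ * δ) y = y := by
    calc shift (δ⁻¹ * γ * δ) y = shift δ⁻¹ (shift γ (shift δ y)) := by
          rw [shift_shift, shift_shift, mul_assoc]
      _ = shift δ⁻¹ (shift δ y) := by rw [h]
      _ = y := by rw [shift_shift]; simp [shift_one]
  have := hy (δ⁻¹ * γ * δ) (by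
    intro hc
    apply hγ
    have : δ * (δ⁻¹ * γ * δ) * δ⁻¹ = δ * 1 * δ⁻¹ := by rw [hc]
    simpa [mul_assoc] using this)
  exact this h2

theorem measurable_shift (γ : G) [MeasurableSpace X] :
    Measurable (shift γ : (G → X) → (G → X)) :=
  measurable_pi_lambda _ fun β => measurable_pi_apply (γ⁻¹ * β)

end BCN

section Univ

open Function Set

attribute [local instance] Classical.propDecidable

variable {G Λ : Type} [Group G] [Group Λ]

/-- The action of `G` on the free part of `ℕ^Λ` through `φ`. -/
noncomputable def act (φ : G →* Λ) (β : G) (x : ↥(freePart Λ ℕ)) : ↥(freePart Λ ℕ) :=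
  ⟨shift (φ β) x.1, BCN.shift_mem_freePart x.2 _⟩

theorem act_val (φ : G →* Λ) (β : G) (x : ↥(freePart Λ ℕ)) (l : Λ) :
    (act φ β x).1 l = x.1 ((φ β)⁻¹ * l) := rfl

theorem act_act (φ : G →* Λ) (a b : G) (x : ↥(freePart Λ ℕ)) :
    act φ a (act φ b x) = act φ (a * b) x := by
  apply Subtype.ext
  show shift (φ a) (shift (φ b) x.1) = _
  rw [BCN.shift_shift, ← map_mul]; rfl

theorem act_one (φ : G →* Λ) (x : ↥(freePart Λ ℕ)) : act φ 1 x = x := by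
  apply Subtype.ext
  show shift (φ 1) x.1 = x.1
  rw [map_one, BCN.shift_one]

theorem act_eq_self (φ : G →* Λ) (hφ : Injective φ) {β : G} {x : ↥(freePart Λ ℕ)}
    (h : act φ β x = x) : β = 1 := by
  by_contra hβ
  have hne : φ β ≠ 1 := fun hc => hβ (hφ (hc.trans (map_one φ).symm))
  exact x.2 (φ β) hne (congrArg Subtype.val h)

theorem measurable_act (φ : G →* Λ) (β : G) : Measurable (act φ β) :=
  Measurable.subtype_mk ((BCN.measurable_shift _).comp measurable_subtype_coe)

/-- helper: measurability from fibers over ℕ-like codomains -/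
theorem meas_of_fibers {α β : Type*} [MeasurableSpace α] [Countable β] [MeasurableSpace β]
    [MeasurableSingletonClass β] {f : α → β}
    (h : ∀ n, MeasurableSet {x | f x = n}) : Measurable f :=
  measurable_to_countable' fun n => by
    have : f ⁻¹' {n} = {x | f x = n} := by ext x; simp
    rw [this]; exact h n

theorem meas_eval (l : Λ) : Measurable (fun x : ↥(freePart Λ ℕ) => x.1 l) :=
  (measurable_pi_apply l).comp measurable_subtype_coe

theorem meas_eq_coords (a b : Λ) : MeasurableSet {x : ↥(freePart Λ ℕ) | x.1 a = x.1 b} := by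
  have : {x : ↥(freePart Λ ℕ) | x.1 a = x.1 b} =
      ⋃ n : ℕ, ({x | x.1 a = n} ∩ {x | x.1 b = n}) := by
    ext x; simp only [mem_setOf_eq, mem_iUnion, mem_inter_iff]
    exact ⟨fun h => ⟨x.1 b, h, rfl⟩, fun ⟨n, h1, h2⟩ => h1.trans h2.symm⟩
  rw [this]
  exact MeasurableSet.iUnion fun n =>
    ((meas_eval a (MeasurableSet.singleton n)).inter (meas_eval b (MeasurableSet.singleton n)))

variable (φ : G →* Λ) (eG : ℕ → G) (eΛ : ℕ → Λ)

/-- index of a group element in the enumeration -/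
noncomputable def idx (hG : Surjective eG) (β : G) : ℕ := Nat.find (hG β)

theorem eG_idx (hG : Surjective eG) (β : G) : eG (idx eG hG β) = β := Nat.find_spec (hG β)

theorem exists_diff (hφ : Injective φ) (hΛ : Surjective eΛ) (i : ℕ) (x : ↥(freePart Λ ℕ)) (h1 : eG i ≠ 1) :
    ∃ j : ℕ, x.1 ((φ (eG i))⁻¹ * eΛ j) ≠ x.1 (eΛ j) := by
  have hne : φ (eG i) ≠ 1 := fun hc => h1 (hφ (hc.trans (map_one φ).symm))
  have h2 : shift (φ (eG i)) x.1 ≠ x.1 := x.2 _ hne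
  have h3 : ∃ l : Λ, x.1 ((φ (eG i))⁻¹ * l) ≠ x.1 l := by
    by_contra hc
    push_neg at hc
    exact h2 (funext fun l => hc l)
  obtain ⟨l, hl⟩ := h3
  obtain ⟨j, rfl⟩ := hΛ l
  exact ⟨j, hl⟩

/-- pointer: position of first difference between `x` and its `eG i`-translate -/
noncomputable def ptr (hφ : Injective φ) (hΛ : Surjective eΛ) (i : ℕ) (x : ↥(freePart Λ ℕ)) : ℕ :=
  if h : eG i = 1 then 0 else Nat.find (exists_diff φ eG eΛ hφ hΛ i x h)

/-- value of `x` at the pointer -/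
noncomputable def pval (hφ : Injective φ) (hΛ : Surjective eΛ) (i : ℕ) (x : ↥(freePart Λ ℕ)) : ℕ :=
  x.1 (eΛ (ptr φ eG eΛ hφ hΛ i x))

theorem ptr_spec (hφ : Injective φ) (hΛ : Surjective eΛ) (i : ℕ) (x : ↥(freePart Λ ℕ)) (h1 : eG i ≠ 1) :
    x.1 ((φ (eG i))⁻¹ * eΛ (ptr φ eG eΛ hφ hΛ i x)) ≠ x.1 (eΛ (ptr φ eG eΛ hφ hΛ i x)) := by
  rw [ptr, dif_neg h1]
  exact Nat.find_spec (exists_diff φ eG eΛ hφ hΛ i x h1)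

theorem meas_ptr (hφ : Injective φ) (hΛ : Surjective eΛ) (i : ℕ) : Measurable (ptr φ eG eΛ hφ hΛ i) := by
  by_cases h1 : eG i = 1
  · have : (ptr φ eG eΛ hφ hΛ i) = fun _ => 0 := funext fun x => dif_pos h1
    rw [this]; exact measurable_const
  · apply meas_of_fibers
    intro p
    have : {x | ptr φ eG eΛ hφ hΛ i x = p} =
        {x : ↥(freePart Λ ℕ) | x.1 ((φ (eG i))⁻¹ * eΛ p) ≠ x.1 (eΛ p)} ∩
        ⋂ m < p, {x : ↥(freePart Λ ℕ) | x.1 ((φ (eG i))⁻¹ * eΛ m) = x.1 (eΛ m)} := by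
      ext x
      simp only [mem_setOf_eq, mem_inter_iff, mem_iInter, ptr, dif_neg h1]
      rw [Nat.find_eq_iff]
      constructor
      · rintro ⟨h2, h3⟩
        exact ⟨h2, fun m hm => not_not.mp (h3 m hm)⟩
      · rintro ⟨h2, h3⟩
        exact ⟨h2, fun m hm => not_not.mpr (h3 m hm)⟩
    rw [this]
    exact ((meas_eq_coords _ _).compl).inter
      (MeasurableSet.iInter fun m => MeasurableSet.iInter fun _ => meas_eq_coords _ _)

theorem meas_pval (hφ : Injective φ) (hΛ : Surjective eΛ) (i : ℕ) : Measurable (pval φ eG eΛ hφ hΛ i) := by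
  apply meas_of_fibers
  intro v
  have : {x | pval φ eG eΛ hφ hΛ i x = v} =
      ⋃ p : ℕ, ({x | ptr φ eG eΛ hφ hΛ i x = p} ∩ {x : ↥(freePart Λ ℕ) | x.1 (eΛ p) = v}) := by
    ext x
    simp only [mem_setOf_eq, mem_iUnion, mem_inter_iff, pval]
    exact ⟨fun h => ⟨_, rfl, h⟩, fun ⟨p, h1, h2⟩ => by rw [h1]; exact h2⟩
  rw [this]
  exact MeasurableSet.iUnion fun p =>
    ((meas_ptr φ eG eΛ hφ hΛ i) (MeasurableSet.singleton p)).inter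
      (meas_eval (eΛ p) (MeasurableSet.singleton v))

end Univ

section Univ2

open Function Set

attribute [local instance] Classical.propDecidable

variable {G Λ : Type} [Group G] [Group Λ]
variable (φ : G →* Λ) (eG : ℕ → G) (eΛ : ℕ → Λ)

theorem Measurable.natPair {α : Type*} [MeasurableSpace α] {f g : α → ℕ}
    (hf : Measurable f) (hg : Measurable g) :
    Measurable fun a => Nat.pair (f a) (g a) := by
  apply meas_of_fibers
  intro n
  have : {a | Nat.pair (f a) (g a) = n} =
      {a | f a = n.unpair.1} ∩ {a | g a = n.unpair.2} := by
    ext a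
    simp only [mem_setOf_eq, mem_inter_iff]
    constructor
    · rintro rfl; simp
    · rintro ⟨h1, h2⟩; rw [h1, h2, Nat.pair_unpair]
  rw [this]
  exact (hf (MeasurableSet.singleton _)).inter (hg (MeasurableSet.singleton _))

/-- iterated encoding of the first `t` pointers and values -/
noncomputable def enc (hφ : Injective φ) (hΛ : Surjective eΛ) (t : ℕ)
    (x : ↥(freePart Λ ℕ)) : ℕ :=
  Nat.rec 0 (fun t r =>
    Nat.pair r (Nat.pair (ptr φ eG eΛ hφ hΛ t x) (pval φ eG eΛ hφ hΛ t x))) t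

theorem enc_succ (hφ : Injective φ) (hΛ : Surjective eΛ) (t : ℕ) (x : ↥(freePart Λ ℕ)) :
    enc φ eG eΛ hφ hΛ (t+1) x =
      Nat.pair (enc φ eG eΛ hφ hΛ t x)
        (Nat.pair (ptr φ eG eΛ hφ hΛ t x) (pval φ eG eΛ hφ hΛ t x)) := rfl

theorem enc_entries (hφ : Injective φ) (hΛ : Surjective eΛ) (t : ℕ)
    {u v : ↥(freePart Λ ℕ)} (h : enc φ eG eΛ hφ hΛ t u = enc φ eG eΛ hφ hΛ t v) :
    ∀ i < t, ptr φ eG eΛ hφ hΛ i u = ptr φ eG eΛ hφ hΛ i v ∧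
      pval φ eG eΛ hφ hΛ i u = pval φ eG eΛ hφ hΛ i v := by
  induction t with
  | zero => intro i hi; exact absurd hi (Nat.not_lt_zero i)
  | succ t ih =>
    rw [enc_succ, enc_succ, Nat.pair_eq_pair] at h
    obtain ⟨h1, h2⟩ := h
    rw [Nat.pair_eq_pair] at h2
    intro i hi
    rcases Nat.lt_succ_iff_lt_or_eq.mp hi with hlt | rfl
    · exact ih h1 i hlt
    · exact h2

theorem meas_enc (hφ : Injective φ) (hΛ : Surjective eΛ) (t : ℕ) :
    Measurable (enc φ eG eΛ hφ hΛ t) := by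
  induction t with
  | zero => exact measurable_const
  | succ t ih =>
    exact Measurable.natPair ih
      (Measurable.natPair (meas_ptr φ eG eΛ hφ hΛ t) (meas_pval φ eG eΛ hφ hΛ t))

theorem key_ne (hφ : Injective φ) (hΛ : Surjective eΛ) (i : ℕ) (u : ↥(freePart Λ ℕ))
    (h1 : eG i ≠ 1)
    (hq : ptr φ eG eΛ hφ hΛ i (act φ (eG i) u) = ptr φ eG eΛ hφ hΛ i u) :
    pval φ eG eΛ hφ hΛ i (act φ (eG i) u) ≠ pval φ eG eΛ hφ hΛ i u := by
  intro hv
  have hd := ptr_spec φ eG eΛ hφ hΛ i u h1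
  apply hd
  calc u.1 ((φ (eG i))⁻¹ * eΛ (ptr φ eG eΛ hφ hΛ i u))
      = (act φ (eG i) u).1 (eΛ (ptr φ eG eΛ hφ hΛ i u)) := (act_val φ (eG i) u _).symm
    _ = (act φ (eG i) u).1 (eΛ (ptr φ eG eΛ hφ hΛ i (act φ (eG i) u))) := by rw [hq]
    _ = pval φ eG eΛ hφ hΛ i (act φ (eG i) u) := rfl
    _ = pval φ eG eΛ hφ hΛ i u := hv
    _ = u.1 (eΛ (ptr φ eG eΛ hφ hΛ i u)) := rfl

theorem enc_ne (hφ : Injective φ) (hΛ : Surjective eΛ) (s : ℕ) (y : ↥(freePart Λ ℕ))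
    (β : G) (hβ : β ≠ 1) (hi : ∃ i ≤ s, β = eG i ∨ β = (eG i)⁻¹) :
    enc φ eG eΛ hφ hΛ (s+1) (act φ β y) ≠ enc φ eG eΛ hφ hΛ (s+1) y := by
  obtain ⟨i, his, hcase⟩ := hi
  intro he
  rcases hcase with rfl | rfl
  · have h1 : eG i ≠ 1 := hβ
    have ent := enc_entries φ eG eΛ hφ hΛ (s+1) he i (Nat.lt_succ_of_le his)
    exact key_ne φ eG eΛ hφ hΛ i y h1 ent.1 ent.2
  · have h1 : eG i ≠ 1 := fun hc => hβ (by rw [hc, inv_one])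
    have hy : y = act φ (eG i) (act φ (eG i)⁻¹ y) := by
      rw [act_act, mul_inv_cancel, act_one]
    have ent := enc_entries φ eG eΛ hφ hΛ (s+1) he.symm i (Nat.lt_succ_of_le his)
    refine key_ne φ eG eΛ hφ hΛ i (act φ (eG i)⁻¹ y) h1 ?_ ?_
    · rw [← hy]; exact ent.1
    · rw [← hy]; exact ent.2

end Univ2

section Univ3

open Function Set

attribute [local instance] Classical.propDecidable

variable {G Λ : Type} [Group G] [Group Λ]
variable (φ : G →* Λ) (eG : ℕ → G) (eΛ : ℕ → Λ)

/-- stages of the greedy construction of a maximal discrete set -/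
noncomputable def stage (hφ : Injective φ) (hΛ : Surjective eΛ)
    (A : Set ↥(freePart Λ ℕ)) (s : ℕ) : ℕ → Set ↥(freePart Λ ℕ) :=
  Nat.rec ∅ (fun n U => U ∪ {y | y ∈ A ∧ enc φ eG eΛ hφ hΛ (s+1) y = n ∧
    ∀ i ≤ s, act φ (eG i) y ∉ U ∧ act φ (eG i)⁻¹ y ∉ U})

theorem stage_succ (hφ : Injective φ) (hΛ : Surjective eΛ)
    (A : Set ↥(freePart Λ ℕ)) (s n : ℕ) :
    stage φ eG eΛ hφ hΛ A s (n+1) = stage φ eG eΛ hφ hΛ A s n ∪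
      {y | y ∈ A ∧ enc φ eG eΛ hφ hΛ (s+1) y = n ∧
        ∀ i ≤ s, act φ (eG i) y ∉ stage φ eG eΛ hφ hΛ A s n ∧
          act φ (eG i)⁻¹ y ∉ stage φ eG eΛ hφ hΛ A s n} := rfl

theorem stage_mono (hφ : Injective φ) (hΛ : Surjective eΛ)
    (A : Set ↥(freePart Λ ℕ)) (s : ℕ) {n m : ℕ} (h : n ≤ m) :
    stage φ eG eΛ hφ hΛ A s n ⊆ stage φ eG eΛ hφ hΛ A s m := by
  induction m with
  | zero => rw [Nat.le_zero.mp h]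
  | succ m ih =>
    rcases Nat.le_succ_iff.mp h with h' | rfl
    · exact (ih h').trans (by rw [stage_succ]; exact subset_union_left)
    · rfl

/-- the greedy maximal discrete subset of `A` at scale `s` -/
noncomputable def greedy (hφ : Injective φ) (hΛ : Surjective eΛ)
    (A : Set ↥(freePart Λ ℕ)) (s : ℕ) : Set ↥(freePart Λ ℕ) :=
  ⋃ n, stage φ eG eΛ hφ hΛ A s n

theorem stage_subset_greedy (hφ : Injective φ) (hΛ : Surjective eΛ)
    (A : Set ↥(freePart Λ ℕ)) (s n : ℕ) :
    stage φ eG eΛ hφ hΛ A s n ⊆ greedy φ eG eΛ hφ hΛ A s :=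
  subset_iUnion (stage φ eG eΛ hφ hΛ A s) n

theorem greedy_subset (hφ : Injective φ) (hΛ : Surjective eΛ)
    (A : Set ↥(freePart Λ ℕ)) (s : ℕ) :
    greedy φ eG eΛ hφ hΛ A s ⊆ A := by
  apply iUnion_subset
  intro n
  induction n with
  | zero => exact empty_subset A
  | succ n ih =>
    rw [stage_succ]
    exact union_subset ih fun y hy => hy.1

theorem greedy_spec (hφ : Injective φ) (hΛ : Surjective eΛ)
    (A : Set ↥(freePart Λ ℕ)) (s : ℕ) (y : ↥(freePart Λ ℕ))
    (hy : y ∈ greedy φ eG eΛ hφ hΛ A s) :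
    y ∈ stage φ eG eΛ hφ hΛ A s (enc φ eG eΛ hφ hΛ (s+1) y + 1) ∧
    ∀ i ≤ s, act φ (eG i) y ∉ stage φ eG eΛ hφ hΛ A s (enc φ eG eΛ hφ hΛ (s+1) y) ∧
      act φ (eG i)⁻¹ y ∉ stage φ eG eΛ hφ hΛ A s (enc φ eG eΛ hφ hΛ (s+1) y) := by
  obtain ⟨_, ⟨N, rfl⟩, hmem⟩ := hy
  induction N with
  | zero => exact absurd hmem (notMem_empty y)
  | succ N ih =>
    change y ∈ stage φ eG eΛ hφ hΛ A s (N+1) at hmem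
    rw [stage_succ] at hmem
    rcases hmem with h | h
    · exact ih h
    · obtain ⟨hA, hcol, hnb⟩ := h
      subst hcol
      exact ⟨mem_union_right _ ⟨hA, rfl, hnb⟩, hnb⟩

theorem greedy_max (hφ : Injective φ) (hΛ : Surjective eΛ)
    (A : Set ↥(freePart Λ ℕ)) (s : ℕ) (y : ↥(freePart Λ ℕ)) (hy : y ∈ A) :
    ∃ β : G, (β = 1 ∨ ∃ i ≤ s, β = eG i ∨ β = (eG i)⁻¹) ∧
      act φ β y ∈ greedy φ eG eΛ hφ hΛ A s := by
  by_cases hg : y ∈ greedy φ eG eΛ hφ hΛ A s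
  · exact ⟨1, Or.inl rfl, by rw [act_one]; exact hg⟩
  · have h1 : y ∉ stage φ eG eΛ hφ hΛ A s (enc φ eG eΛ hφ hΛ (s+1) y + 1) :=
      fun hc => hg (stage_subset_greedy φ eG eΛ hφ hΛ A s _ hc)
    rw [stage_succ] at h1
    have h3 : ¬ ∀ i ≤ s,
        act φ (eG i) y ∉ stage φ eG eΛ hφ hΛ A s (enc φ eG eΛ hφ hΛ (s+1) y) ∧
        act φ (eG i)⁻¹ y ∉ stage φ eG eΛ hφ hΛ A s (enc φ eG eΛ hφ hΛ (s+1) y) :=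
      fun hc => h1 (mem_union_right _ ⟨hy, rfl, hc⟩)
    push_neg at h3
    obtain ⟨i, his, himp⟩ := h3
    by_cases hc : act φ (eG i) y ∈ stage φ eG eΛ hφ hΛ A s (enc φ eG eΛ hφ hΛ (s+1) y)
    · exact ⟨eG i, Or.inr ⟨i, his, Or.inl rfl⟩,
        stage_subset_greedy φ eG eΛ hφ hΛ A s _ hc⟩
    · exact ⟨(eG i)⁻¹, Or.inr ⟨i, his, Or.inr rfl⟩,
        stage_subset_greedy φ eG eΛ hφ hΛ A s _ (himp hc)⟩

theorem greedy_discrete (hφ : Injective φ) (hΛ : Surjective eΛ)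
    (A : Set ↥(freePart Λ ℕ)) (s : ℕ) (y : ↥(freePart Λ ℕ))
    (hy : y ∈ greedy φ eG eΛ hφ hΛ A s) (β : G) (hβ : β ≠ 1)
    (hi : ∃ i ≤ s, β = eG i ∨ β = (eG i)⁻¹)
    (hz : act φ β y ∈ greedy φ eG eΛ hφ hΛ A s) : False := by
  have hne := enc_ne φ eG eΛ hφ hΛ s y β hβ hi
  obtain ⟨sy1, sy2⟩ := greedy_spec φ eG eΛ hφ hΛ A s y hy
  obtain ⟨sz1, sz2⟩ := greedy_spec φ eG eΛ hφ hΛ A s _ hz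
  obtain ⟨i, his, hcase⟩ := hi
  rcases lt_or_gt_of_ne hne with hlt | hgt
  · -- enc (act β y) < enc y
    have hzy : act φ β y ∈ stage φ eG eΛ hφ hΛ A s (enc φ eG eΛ hφ hΛ (s+1) y) :=
      stage_mono φ eG eΛ hφ hΛ A s hlt sz1
    rcases hcase with rfl | rfl
    · exact (sy2 i his).1 hzy
    · exact (sy2 i his).2 hzy
  · have hyz : y ∈ stage φ eG eΛ hφ hΛ A s (enc φ eG eΛ hφ hΛ (s+1) (act φ β y)) :=
      stage_mono φ eG eΛ hφ hΛ A s hgt sy1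
    rcases hcase with rfl | rfl
    · have : act φ (eG i)⁻¹ (act φ (eG i) y) = y := by
        rw [act_act, inv_mul_cancel, act_one]
      exact (sz2 i his).2 (by rw [this]; exact hyz)
    · have : act φ (eG i) (act φ (eG i)⁻¹ y) = y := by
        rw [act_act, mul_inv_cancel, act_one]
      exact (sz2 i his).1 (by rw [this]; exact hyz)

theorem meas_stage (hφ : Injective φ) (hΛ : Surjective eΛ)
    (A : Set ↥(freePart Λ ℕ)) (hA : MeasurableSet A) (s n : ℕ) :
    MeasurableSet (stage φ eG eΛ hφ hΛ A s n) := by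
  induction n with
  | zero => exact MeasurableSet.empty
  | succ n ih =>
    rw [stage_succ]
    apply ih.union
    have : {y | y ∈ A ∧ enc φ eG eΛ hφ hΛ (s+1) y = n ∧
        ∀ i ≤ s, act φ (eG i) y ∉ stage φ eG eΛ hφ hΛ A s n ∧
          act φ (eG i)⁻¹ y ∉ stage φ eG eΛ hφ hΛ A s n} =
        A ∩ ({y | enc φ eG eΛ hφ hΛ (s+1) y = n} ∩
          ⋂ i, ⋂ (_ : i ≤ s), ((act φ (eG i) ⁻¹' (stage φ eG eΛ hφ hΛ A s n))ᶜ ∩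
            (act φ (eG i)⁻¹ ⁻¹' (stage φ eG eΛ hφ hΛ A s n))ᶜ)) := by
      ext y
      simp only [mem_inter_iff, mem_setOf_eq, mem_iInter, mem_compl_iff, mem_preimage]
      try tauto
    rw [this]
    exact hA.inter (((meas_enc φ eG eΛ hφ hΛ (s+1)) (MeasurableSet.singleton n)).inter
      (MeasurableSet.iInter fun i => MeasurableSet.iInter fun _ =>
        ((measurable_act φ (eG i) (ih)).compl).inter
          ((measurable_act φ (eG i)⁻¹ (ih)).compl)))

theorem meas_greedy (hφ : Injective φ) (hΛ : Surjective eΛ)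
    (A : Set ↥(freePart Λ ℕ)) (hA : MeasurableSet A) (s : ℕ) :
    MeasurableSet (greedy φ eG eΛ hφ hΛ A s) :=
  MeasurableSet.iUnion fun n => meas_stage φ eG eΛ hφ hΛ A hA s n

/-- decreasing sequence of maximal discrete sets at growing scales -/
noncomputable def SS (hφ : Injective φ) (hΛ : Surjective eΛ) : ℕ → Set ↥(freePart Λ ℕ) :=
  Nat.rec Set.univ (fun j Sj => greedy φ eG eΛ hφ hΛ Sj (j+1))

theorem SS_succ (hφ : Injective φ) (hΛ : Surjective eΛ) (j : ℕ) :
    SS φ eG eΛ hφ hΛ (j+1) = greedy φ eG eΛ hφ hΛ (SS φ eG eΛ hφ hΛ j) (j+1) := rfl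

theorem SS_antitone (hφ : Injective φ) (hΛ : Surjective eΛ) {a b : ℕ} (h : a ≤ b) :
    SS φ eG eΛ hφ hΛ b ⊆ SS φ eG eΛ hφ hΛ a := by
  induction b with
  | zero => rw [Nat.le_zero.mp h]
  | succ b ih =>
    rcases Nat.le_succ_iff.mp h with h' | rfl
    · exact (greedy_subset φ eG eΛ hφ hΛ _ _).trans (ih h')
    · rfl

theorem meas_SS (hφ : Injective φ) (hΛ : Surjective eΛ) (j : ℕ) :
    MeasurableSet (SS φ eG eΛ hφ hΛ j) := by
  induction j with
  | zero => exact MeasurableSet.univ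
  | succ j ih => exact meas_greedy φ eG eΛ hφ hΛ _ ih (j+1)

end Univ3

section Univ4

open Function Set

attribute [local instance] Classical.propDecidable

variable {G Λ : Type} [Group G] [Group Λ]
variable (φ : G →* Λ) (eG : ℕ → G) (eΛ : ℕ → Λ)

/-- syndeticity radius bound for the scales -/
noncomputable def RR (hG : Surjective eG) : ℕ → ℕ :=
  Nat.rec (idx eG hG 1) (fun j Rj => (Finset.range (Rj+1)).sup fun i'' =>
    max (idx eG hG (eG i'')) ((Finset.range (j+2)).sup fun i =>
      max (idx eG hG (eG i * eG i'')) (idx eG hG ((eG i)⁻¹ * eG i''))))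

theorem RR_succ (hG : Surjective eG) (j : ℕ) :
    RR eG hG (j+1) = (Finset.range (RR eG hG j + 1)).sup fun i'' =>
      max (idx eG hG (eG i'')) ((Finset.range (j+2)).sup fun i =>
        max (idx eG hG (eG i * eG i'')) (idx eG hG ((eG i)⁻¹ * eG i''))) := rfl

theorem synd (hφ : Injective φ) (hG : Surjective eG) (hΛ : Surjective eΛ)
    (j : ℕ) (y : ↥(freePart Λ ℕ)) :
    ∃ β : G, idx eG hG β ≤ RR eG hG j ∧ act φ β y ∈ SS φ eG eΛ hφ hΛ j := by
  induction j with
  | zero => exact ⟨1, Nat.le_refl _, by rw [act_one]; exact Set.mem_univ y⟩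
  | succ j ih =>
    obtain ⟨β, hle, hmem⟩ := ih
    obtain ⟨β', hβ', hmem'⟩ := greedy_max φ eG eΛ hφ hΛ _ (j+1) _ hmem
    refine ⟨β' * β, ?_, by rw [← act_act]; exact hmem'⟩
    have hrange : idx eG hG β ∈ Finset.range (RR eG hG j + 1) :=
      Finset.mem_range.mpr (Nat.lt_succ_of_le hle)
    have hsup := Finset.le_sup (f := fun i'' =>
      max (idx eG hG (eG i'')) ((Finset.range (j+2)).sup fun i =>
        max (idx eG hG (eG i * eG i'')) (idx eG hG ((eG i)⁻¹ * eG i'')))) hrange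
    rw [RR_succ]
    rcases hβ' with rfl | ⟨i, hij, hc⟩
    · rw [one_mul]
      refine le_trans ?_ hsup
      refine le_trans ?_ (le_max_left _ _)
      rw [eG_idx eG hG]
    · have hir : i ∈ Finset.range (j+2) := Finset.mem_range.mpr (Nat.lt_succ_of_le hij)
      have hsup2 := Finset.le_sup (f := fun i =>
        max (idx eG hG (eG i * eG (idx eG hG β)))
          (idx eG hG ((eG i)⁻¹ * eG (idx eG hG β)))) hir
      rcases hc with rfl | rfl
      · refine le_trans ?_ hsup
        refine le_trans ?_ (le_max_right _ _)
        refine le_trans ?_ hsup2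
        refine le_trans ?_ (le_max_left _ _)
        rw [eG_idx eG hG]
      · refine le_trans ?_ hsup
        refine le_trans ?_ (le_max_right _ _)
        refine le_trans ?_ hsup2
        refine le_trans ?_ (le_max_right _ _)
        rw [eG_idx eG hG]

/-- the set of points that are markers at every scale -/
noncomputable def WW (hφ : Injective φ) (hΛ : Surjective eΛ) : Set ↥(freePart Λ ℕ) :=
  ⋂ j, SS φ eG eΛ hφ hΛ j

theorem meas_WW (hφ : Injective φ) (hΛ : Surjective eΛ) :
    MeasurableSet (WW φ eG eΛ hφ hΛ) :=
  MeasurableSet.iInter fun j => meas_SS φ eG eΛ hφ hΛ j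

theorem W_discrete (hφ : Injective φ) (hG : Surjective eG) (hΛ : Surjective eΛ)
    {y : ↥(freePart Λ ℕ)} {β : G} (hy : y ∈ WW φ eG eΛ hφ hΛ) (hβ : β ≠ 1)
    (hz : act φ β y ∈ WW φ eG eΛ hφ hΛ) : False := by
  have h1 : y ∈ SS φ eG eΛ hφ hΛ (idx eG hG β + 1) := mem_iInter.mp hy _
  have h2 : act φ β y ∈ SS φ eG eΛ hφ hΛ (idx eG hG β + 1) := mem_iInter.mp hz _
  exact greedy_discrete φ eG eΛ hφ hΛ _ (idx eG hG β + 1) y h1 β hβ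
    ⟨idx eG hG β, Nat.le_succ _, Or.inl (eG_idx eG hG β).symm⟩ h2

/-- marker depth -/
noncomputable def mm (hφ : Injective φ) (hΛ : Surjective eΛ) (y : ↥(freePart Λ ℕ)) : ℕ :=
  if h : ∃ t, y ∉ SS φ eG eΛ hφ hΛ t then Nat.find h - 1 else 0

theorem mm_ge (hφ : Injective φ) (hΛ : Surjective eΛ) (y : ↥(freePart Λ ℕ))
    (hyW : y ∉ WW φ eG eΛ hφ hΛ) (j : ℕ) (hj : y ∈ SS φ eG eΛ hφ hΛ j) :
    j ≤ mm φ eG eΛ hφ hΛ y := by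
  have h : ∃ t, y ∉ SS φ eG eΛ hφ hΛ t := by
    by_contra hc
    push_neg at hc
    exact hyW (mem_iInter.mpr hc)
  rw [mm, dif_pos h]
  have hlt : j < Nat.find h := by
    rcases Nat.lt_or_ge j (Nat.find h) with h' | h'
    · exact h'
    · exact absurd (SS_antitone φ eG eΛ hφ hΛ h' hj) (Nat.find_spec h)
  exact Nat.le_pred_of_lt hlt

theorem mm_fiber (hφ : Injective φ) (hΛ : Surjective eΛ) (n : ℕ) :
    {y | mm φ eG eΛ hφ hΛ y = n} =
      (if n = 0 then WW φ eG eΛ hφ hΛ else ∅) ∪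
        (SS φ eG eΛ hφ hΛ n \ SS φ eG eΛ hφ hΛ (n+1)) := by
  ext y
  by_cases hyW : y ∈ WW φ eG eΛ hφ hΛ
  · have h : ¬ ∃ t, y ∉ SS φ eG eΛ hφ hΛ t := by
      push_neg
      exact mem_iInter.mp hyW
    have hmm : mm φ eG eΛ hφ hΛ y = 0 := by rw [mm, dif_neg h]
    have hss : y ∈ SS φ eG eΛ hφ hΛ (n+1) := mem_iInter.mp hyW _
    simp only [mem_setOf_eq, hmm, mem_union, mem_diff, mem_ite_empty_right]
    constructor
    · rintro rfl; exact Or.inl ⟨rfl, hyW⟩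
    · rintro (⟨rfl, _⟩ | ⟨_, hc⟩)
      · rfl
      · exact absurd hss hc
  · have h : ∃ t, y ∉ SS φ eG eΛ hφ hΛ t := by
      by_contra hc
      push_neg at hc
      exact hyW (mem_iInter.mpr hc)
    have hmm : mm φ eG eΛ hφ hΛ y = Nat.find h - 1 := by rw [mm, dif_pos h]
    have hpos : 1 ≤ Nat.find h := by
      rcases Nat.eq_zero_or_pos (Nat.find h) with h0 | h1
      · exfalso
        have hspec := Nat.find_spec h
        rw [h0] at hspec
        exact hspec trivial
      · exact h1
    simp only [mem_setOf_eq, hmm, mem_union, mem_diff, mem_ite_empty_right]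
    constructor
    · rintro rfl
      refine Or.inr ⟨?_, ?_⟩
      · by_contra hc
        have := Nat.find_min h (m := Nat.find h - 1) (Nat.sub_lt hpos Nat.one_pos)
        exact this hc
      · have : Nat.find h - 1 + 1 = Nat.find h := Nat.succ_pred_eq_of_pos hpos
        rw [this]
        exact Nat.find_spec h
    · rintro (⟨_, hc⟩ | ⟨hin, hout⟩)
      · exact absurd hc hyW
      · have h1 : Nat.find h ≤ n + 1 := Nat.find_le hout
        have h2 : n < Nat.find h := by
          rcases Nat.lt_or_ge n (Nat.find h) with h' | h'
          · exact h'
          · exact absurd (SS_antitone φ eG eΛ hφ hΛ h' hin) (Nat.find_spec h)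
        omega

theorem meas_mm (hφ : Injective φ) (hΛ : Surjective eΛ) :
    Measurable (mm φ eG eΛ hφ hΛ) := by
  apply meas_of_fibers
  intro n
  rw [mm_fiber]
  refine MeasurableSet.union ?_ ((meas_SS φ eG eΛ hφ hΛ n).diff (meas_SS φ eG eΛ hφ hΛ (n+1)))
  by_cases h : n = 0
  · rw [if_pos h]; exact meas_WW φ eG eΛ hφ hΛ
  · rw [if_neg h]; exact MeasurableSet.empty

/-- conjugation bound -/
noncomputable def Cb (hG : Surjective eG) (j : ℕ) : ℕ :=
  (Finset.range (RR eG hG j + 1)).sup fun i =>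
    (Finset.range (j+1)).sup fun i' => idx eG hG (eG i * eG i' * (eG i)⁻¹)

noncomputable def Cb' (hG : Surjective eG) (j : ℕ) : ℕ :=
  (Finset.range (j+1)).sup (Cb eG hG)

/-- window size -/
noncomputable def kk (hφ : Injective φ) (hG : Surjective eG) (hΛ : Surjective eΛ)
    (y : ↥(freePart Λ ℕ)) : ℕ :=
  Cb' eG hG (mm φ eG eΛ hφ hΛ y) + 1

theorem meas_kk (hφ : Injective φ) (hG : Surjective eG) (hΛ : Surjective eΛ) :
    Measurable (kk φ eG eΛ hφ hG hΛ) :=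
  (measurable_from_top (f := fun n => Cb' eG hG n + 1)).comp (meas_mm φ eG eΛ hφ hΛ)

/-- the final Borel labelling -/
noncomputable def gg (hφ : Injective φ) (hG : Surjective eG) (hΛ : Surjective eΛ)
    (y : ↥(freePart Λ ℕ)) : ℕ :=
  Nat.pair (kk φ eG eΛ hφ hG hΛ y) (enc φ eG eΛ hφ hΛ (kk φ eG eΛ hφ hG hΛ y) y)

theorem meas_gg (hφ : Injective φ) (hG : Surjective eG) (hΛ : Surjective eΛ) :
    Measurable (gg φ eG eΛ hφ hG hΛ) := by
  apply meas_of_fibers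
  intro n
  have : {y | gg φ eG eΛ hφ hG hΛ y = n} =
      ⋃ t : ℕ, ({y | kk φ eG eΛ hφ hG hΛ y = t} ∩
        {y | Nat.pair t (enc φ eG eΛ hφ hΛ t y) = n}) := by
    ext y
    simp only [mem_setOf_eq, mem_iUnion, mem_inter_iff, gg]
    constructor
    · intro h; exact ⟨_, rfl, h⟩
    · rintro ⟨t, h1, h2⟩; rw [h1]; exact h2
  rw [this]
  exact MeasurableSet.iUnion fun t =>
    ((meas_kk φ eG eΛ hφ hG hΛ) (MeasurableSet.singleton t)).inter
      ((Measurable.natPair measurable_const (meas_enc φ eG eΛ hφ hΛ t))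
        (MeasurableSet.singleton n))

theorem core_ne (hφ : Injective φ) (hG : Surjective eG) (hΛ : Surjective eΛ)
    (x : ↥(freePart Λ ℕ)) (hx : ∀ β : G, act φ β x ∉ WW φ eG eΛ hφ hΛ)
    (γ : G) (hγ : γ ≠ 1) :
    ∃ β : G, gg φ eG eΛ hφ hG hΛ (act φ (β⁻¹ * γ) x) ≠
      gg φ eG eΛ hφ hG hΛ (act φ β⁻¹ x) := by
  set j := idx eG hG γ + 1 with hj
  obtain ⟨β₀, hβ₀, hu⟩ := synd φ eG eΛ hφ hG hΛ j x
  refine ⟨β₀⁻¹, ?_⟩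
  intro he
  rw [inv_inv] at he
  set u := act φ β₀ x with hudef
  set c := β₀ * γ * β₀⁻¹ with hc
  have hrw : act φ (β₀ * γ) x = act φ c u := by
    rw [hudef, act_act, hc]
    congr 1
    group
  rw [hrw] at he
  -- u is not in WW, so mm is well behaved
  have huW : u ∉ WW φ eG eΛ hφ hΛ := hx β₀
  have hmge : j ≤ mm φ eG eΛ hφ hΛ u := mm_ge φ eG eΛ hφ hΛ u huW j hu
  have hkk : Cb eG hG j + 1 ≤ kk φ eG eΛ hφ hG hΛ u := by
    have : Cb eG hG j ≤ Cb' eG hG (mm φ eG eΛ hφ hΛ u) :=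
      Finset.le_sup (Finset.mem_range.mpr (Nat.lt_succ_of_le hmge))
    exact Nat.add_le_add_right this 1
  have hcne : c ≠ 1 := by
    rw [hc]
    intro hcon
    apply hγ
    have : β₀⁻¹ * (β₀ * γ * β₀⁻¹) * β₀ = β₀⁻¹ * 1 * β₀ := by rw [hcon]
    simpa [mul_assoc] using this
  have hidxc : idx eG hG c ≤ Cb eG hG j := by
    have h1 : idx eG hG β₀ ∈ Finset.range (RR eG hG j + 1) :=
      Finset.mem_range.mpr (Nat.lt_succ_of_le hβ₀)
    have h2 : idx eG hG γ ∈ Finset.range (j+1) :=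
      Finset.mem_range.mpr (by omega)
    have hs1 := Finset.le_sup (f := fun i =>
      (Finset.range (j+1)).sup fun i' => idx eG hG (eG i * eG i' * (eG i)⁻¹)) h1
    have hs2 := Finset.le_sup (f := fun i' =>
      idx eG hG (eG (idx eG hG β₀) * eG i' * (eG (idx eG hG β₀))⁻¹)) h2
    refine le_trans ?_ (le_trans hs2 hs1)
    show idx eG hG c ≤ idx eG hG (eG (idx eG hG β₀) * eG (idx eG hG γ) * (eG (idx eG hG β₀))⁻¹)
    rw [eG_idx eG hG, eG_idx eG hG]
  have hlt : idx eG hG c < kk φ eG eΛ hφ hG hΛ u := by omega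
  -- unpack the equality of labels
  rw [gg, gg, Nat.pair_eq_pair] at he
  obtain ⟨hk, henc⟩ := he
  rw [hk] at henc
  have ent := enc_entries φ eG eΛ hφ hΛ _ henc (idx eG hG c) hlt
  have h1 : eG (idx eG hG c) ≠ 1 := by rw [eG_idx eG hG]; exact hcne
  have hact : act φ (eG (idx eG hG c)) u = act φ c u := by rw [eG_idx eG hG]
  apply key_ne φ eG eΛ hφ hΛ (idx eG hG c) u h1 (by rw [hact]; exact ent.1)
  rw [hact]
  exact ent.2

end Univ4

section Univ5

open Function Set

attribute [local instance] Classical.propDecidable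

variable {G Λ : Type} [Group G] [Group Λ]
variable (φ : G →* Λ) (eG : ℕ → G) (eΛ : ℕ → Λ)

theorem W_unique (hφ : Injective φ) (hG : Surjective eG) (hΛ : Surjective eΛ)
    {x : ↥(freePart Λ ℕ)} {β₁ β₂ : G} (h1 : act φ β₁ x ∈ WW φ eG eΛ hφ hΛ)
    (h2 : act φ β₂ x ∈ WW φ eG eΛ hφ hΛ) : β₁ = β₂ := by
  by_contra hne
  refine W_discrete φ eG eΛ hφ hG hΛ h1 (β := β₂ * β₁⁻¹) ?_ ?_
  · intro hc
    exact hne (mul_inv_eq_one.mp hc).symm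
  · rw [act_act, inv_mul_cancel_right]
    exact h2

/-- the saturation of the residual marker set -/
noncomputable def WSat (hφ : Injective φ) (hΛ : Surjective eΛ) : Set ↥(freePart Λ ℕ) :=
  {x | ∃ β : G, act φ β x ∈ WW φ eG eΛ hφ hΛ}

theorem meas_WSat (hφ : Injective φ) (hG : Surjective eG) (hΛ : Surjective eΛ) :
    MeasurableSet (WSat φ eG eΛ hφ hΛ) := by
  have : WSat φ eG eΛ hφ hΛ = ⋃ i : ℕ, act φ (eG i) ⁻¹' WW φ eG eΛ hφ hΛ := by
    ext x
    simp only [WSat, mem_setOf_eq, mem_iUnion, mem_preimage]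
    constructor
    · rintro ⟨β, hβ⟩
      exact ⟨idx eG hG β, by rw [eG_idx eG hG]; exact hβ⟩
    · rintro ⟨i, hi⟩
      exact ⟨eG i, hi⟩
  rw [this]
  exact MeasurableSet.iUnion fun i => measurable_act φ (eG i) (meas_WW φ eG eΛ hφ hΛ)

theorem WSat_invariant (hφ : Injective φ) (hΛ : Surjective eΛ) (α : G)
    {x : ↥(freePart Λ ℕ)} (hx : x ∈ WSat φ eG eΛ hφ hΛ) :
    act φ α x ∈ WSat φ eG eΛ hφ hΛ := by
  obtain ⟨β, hβ⟩ := hx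
  refine ⟨β * α⁻¹, ?_⟩
  rw [act_act, inv_mul_cancel_right]
  exact hβ

/-- selector index on the saturation -/
noncomputable def jW (hφ : Injective φ) (hΛ : Surjective eΛ) (x : ↥(freePart Λ ℕ)) : ℕ :=
  if h : ∃ i : ℕ, act φ (eG i) x ∈ WW φ eG eΛ hφ hΛ then Nat.find h else 0

theorem jW_spec (hφ : Injective φ) (hG : Surjective eG) (hΛ : Surjective eΛ)
    {x : ↥(freePart Λ ℕ)} (hx : x ∈ WSat φ eG eΛ hφ hΛ) :
    act φ (eG (jW φ eG eΛ hφ hΛ x)) x ∈ WW φ eG eΛ hφ hΛ := by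
  obtain ⟨β, hβ⟩ := hx
  have h : ∃ i : ℕ, act φ (eG i) x ∈ WW φ eG eΛ hφ hΛ :=
    ⟨idx eG hG β, by rw [eG_idx eG hG]; exact hβ⟩
  rw [jW, dif_pos h]
  exact Nat.find_spec h

theorem meas_jW (hφ : Injective φ) (hΛ : Surjective eΛ) :
    Measurable (jW φ eG eΛ hφ hΛ) := by
  apply meas_of_fibers
  intro n
  have : {x | jW φ eG eΛ hφ hΛ x = n} =
      ((act φ (eG n) ⁻¹' WW φ eG eΛ hφ hΛ) ∩
        ⋂ i, ⋂ (_ : i < n), (act φ (eG i) ⁻¹' WW φ eG eΛ hφ hΛ)ᶜ) ∪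
      (if n = 0 then ⋂ i : ℕ, (act φ (eG i) ⁻¹' WW φ eG eΛ hφ hΛ)ᶜ else ∅) := by
    ext x
    by_cases h : ∃ i : ℕ, act φ (eG i) x ∈ WW φ eG eΛ hφ hΛ
    · simp only [mem_setOf_eq, jW, dif_pos h, mem_union, mem_inter_iff, mem_iInter,
        mem_preimage, mem_compl_iff]
      rw [Nat.find_eq_iff h]
      constructor
      · rintro ⟨h1, h2⟩
        exact Or.inl ⟨h1, h2⟩
      · rintro (⟨h1, h2⟩ | hbad)
        · exact ⟨h1, h2⟩
        · exfalso
          rcases Nat.eq_zero_or_pos n with rfl | _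
          · rw [if_pos rfl] at hbad
            obtain ⟨i, hi⟩ := h
            exact (mem_iInter.mp hbad i) hi
          · rw [if_neg (by omega)] at hbad
            exact hbad
    · simp only [mem_setOf_eq, jW, dif_neg h, mem_union, mem_inter_iff, mem_iInter,
        mem_preimage, mem_compl_iff]
      push_neg at h
      constructor
      · rintro rfl
        rw [if_pos rfl]
        exact Or.inr (mem_iInter.mpr fun i => h i)
      · rintro (⟨h1, _⟩ | _)
        · exact absurd h1 (h n)
        · by_cases hn : n = 0
          · exact hn.symm ▸ rfl
          · rename_i hbad
            rw [if_neg hn] at hbad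
            exact absurd hbad (notMem_empty x)
  rw [this]
  refine MeasurableSet.union ?_ ?_
  · exact (measurable_act φ (eG n) (meas_WW φ eG eΛ hφ hΛ)).inter
      (MeasurableSet.iInter fun i => MeasurableSet.iInter fun _ =>
        (measurable_act φ (eG i) (meas_WW φ eG eΛ hφ hΛ)).compl)
  · by_cases hn : n = 0
    · rw [if_pos hn]
      exact MeasurableSet.iInter fun i =>
        (measurable_act φ (eG i) (meas_WW φ eG eΛ hφ hΛ)).compl
    · rw [if_neg hn]
      exact MeasurableSet.empty

/-- a fixed free point of `ℕ^G` -/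
noncomputable def hfree (hG : Surjective eG) : G → ℕ := fun β => idx eG hG β

theorem idx_injective (hG : Surjective eG) : Injective (idx eG hG) := by
  intro a b hab
  rw [← eG_idx eG hG a, hab, eG_idx eG hG]

theorem hfree_mem (hG : Surjective eG) : hfree eG hG ∈ freePart G ℕ := by
  intro γ hγ hc
  apply hγ
  have := congrFun hc γ
  have h2 : γ⁻¹ * γ = γ := idx_injective eG hG this
  rw [inv_mul_cancel] at h2
  exact h2.symm

end Univ5

section Univ6

open Function Set

attribute [local instance] Classical.propDecidable

variable {G Λ : Type} [Group G] [Group Λ]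

theorem exists_univ (φ : G →* Λ) (eG : ℕ → G) (eΛ : ℕ → Λ)
    (hφ : Injective φ) (hG : Surjective eG) (hΛ : Surjective eΛ) :
    ∃ π : ↥(freePart Λ ℕ) → (G → ℕ), Measurable π ∧ (∀ x, π x ∈ freePart G ℕ) ∧
      ∀ (α : G) (x : ↥(freePart Λ ℕ)), π (act φ α x) = shift α (π x) := by
  set πs : ↥(freePart Λ ℕ) → (G → ℕ) :=
    fun x => shift (eG (jW φ eG eΛ hφ hΛ x))⁻¹ (hfree eG hG) with hπs
  set πn : ↥(freePart Λ ℕ) → (G → ℕ) :=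
    fun x => fun β => gg φ eG eΛ hφ hG hΛ (act φ β⁻¹ x) with hπn
  refine ⟨(WSat φ eG eΛ hφ hΛ).piecewise πs πn, ?_, ?_, ?_⟩
  · -- measurability
    refine Measurable.piecewise (meas_WSat φ eG eΛ hφ hG hΛ) ?_ ?_
    · apply measurable_pi_lambda
      intro β
      have : (fun x => πs x β) =
          (fun n : ℕ => hfree eG hG ((eG n)⁻¹⁻¹ * β)) ∘ (jW φ eG eΛ hφ hΛ) := rfl
      rw [this]
      exact measurable_from_top.comp (meas_jW φ eG eΛ hφ hΛ)
    · apply measurable_pi_lambda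
      intro β
      exact (meas_gg φ eG eΛ hφ hG hΛ).comp (measurable_act φ β⁻¹)
  · -- freeness
    intro x
    by_cases hx : x ∈ WSat φ eG eΛ hφ hΛ
    · rw [Set.piecewise_eq_of_mem _ _ _ hx]
      exact BCN.shift_mem_freePart (hfree_mem eG hG) _
    · rw [Set.piecewise_eq_of_notMem _ _ _ hx]
      intro γ hγ hcon
      have hxW : ∀ β : G, act φ β x ∉ WW φ eG eΛ hφ hΛ := fun β hb => hx ⟨β, hb⟩
      obtain ⟨β, hβ⟩ := core_ne φ eG eΛ hφ hG hΛ x hxW γ hγ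
      apply hβ
      have h2 : (γ⁻¹ * β)⁻¹ = β⁻¹ * γ := by rw [mul_inv_rev, inv_inv]
      calc gg φ eG eΛ hφ hG hΛ (act φ (β⁻¹ * γ) x)
          = gg φ eG eΛ hφ hG hΛ (act φ ((γ⁻¹ * β)⁻¹) x) := by rw [h2]
        _ = (shift γ (πn x)) β := rfl
        _ = (πn x) β := by rw [hcon]
        _ = gg φ eG eΛ hφ hG hΛ (act φ β⁻¹ x) := rfl
  · -- equivariance
    intro α x
    by_cases hx : x ∈ WSat φ eG eΛ hφ hΛ
    · have hax : act φ α x ∈ WSat φ eG eΛ hφ hΛ := WSat_invariant φ eG eΛ hφ hΛ α hx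
      rw [Set.piecewise_eq_of_mem _ _ _ hax, Set.piecewise_eq_of_mem _ _ _ hx]
      show shift (eG (jW φ eG eΛ hφ hΛ (act φ α x)))⁻¹ (hfree eG hG) =
        shift α (shift (eG (jW φ eG eΛ hφ hΛ x))⁻¹ (hfree eG hG))
      have hb' := jW_spec φ eG eΛ hφ hG hΛ hax
      rw [act_act] at hb'
      have hb := jW_spec φ eG eΛ hφ hG hΛ hx
      have heq : eG (jW φ eG eΛ hφ hΛ (act φ α x)) * α = eG (jW φ eG eΛ hφ hΛ x) :=
        W_unique φ eG eΛ hφ hG hΛ hb' hb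
      rw [BCN.shift_shift]
      congr 1
      rw [← heq, mul_inv_rev, mul_inv_cancel_left]
    · have hax : act φ α x ∉ WSat φ eG eΛ hφ hΛ := by
        intro hc
        apply hx
        have := WSat_invariant φ eG eΛ hφ hΛ α⁻¹ hc
        rwa [act_act, inv_mul_cancel, act_one] at this
      rw [Set.piecewise_eq_of_notMem _ _ _ hax, Set.piecewise_eq_of_notMem _ _ _ hx]
      funext β
      show gg φ eG eΛ hφ hG hΛ (act φ β⁻¹ (act φ α x)) =
        gg φ eG eΛ hφ hG hΛ (act φ (α⁻¹ * β)⁻¹ x)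
      rw [act_act]
      have h2 : (α⁻¹ * β)⁻¹ = β⁻¹ * α := by rw [mul_inv_rev, inv_inv]
      rw [h2]

end Univ6

section App

open Function Set

theorem countable_of_fg {Γ : Type} [Group Γ] (S : Set Γ) (hfin : S.Finite)
    (hgen : Subgroup.closure S = ⊤) : Countable Γ := by
  have hfin' : (S ∪ S⁻¹).Finite := hfin.union hfin.inv
  have : Countable ↥(S ∪ S⁻¹) := hfin'.countable.to_subtype
  have hsurj : Surjective (fun l : List ↥(S ∪ S⁻¹) => (l.map Subtype.val).prod) := by
    intro x
    have hx : x ∈ Submonoid.closure (S ∪ S⁻¹) := by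
      rw [← Subgroup.closure_toSubmonoid]
      show x ∈ (Subgroup.closure S).toSubmonoid
      rw [hgen]
      trivial
    obtain ⟨l, hl, hprod⟩ := Submonoid.exists_list_of_mem_closure hx
    refine ⟨l.attach.map (fun e => (⟨e.1, hl e.1 e.2⟩ : ↥(S ∪ S⁻¹))), ?_⟩
    simp only [List.map_map]
    have : (Subtype.val ∘ fun e : {y // y ∈ l} => (⟨e.1, hl e.1 e.2⟩ : ↥(S ∪ S⁻¹))) =
        fun e : {y // y ∈ l} => e.1 := rfl
    rw [this]
    simpa using hprod
  exact hsurj.countable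

theorem countable_coprod {Γ Δ : Type} [Group Γ] [Group Δ] [Countable Γ] [Countable Δ] :
    Countable (Monoid.Coprod Γ Δ) := by
  have hsurj : Surjective (fun l : List (Γ ⊕ Δ) => Monoid.Coprod.mk (FreeMonoid.ofList l)) := by
    intro x
    obtain ⟨w, rfl⟩ := Monoid.Coprod.mk_surjective x
    exact ⟨FreeMonoid.toList w, rfl⟩
  exact hsurj.countable

end App

/-- If `Γ` and `Δ` are finitely generated marked groups, then
`χ_B(G(Γ*Δ, ℕ)) ≤ χ_B(G(Γ, ℕ)) · χ_B(G(Δ, ℕ))`, where `Γ*Δ` is marked by the union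
of the generators of `Γ` and `Δ`. -/
theorem stmt_6 (Γ Δ : Type) [Group Γ] [Group Δ]
    (S : Set Γ) (T : Set Δ)
    (hSfin : S.Finite) (hTfin : T.Finite)
    (hS1 : (1 : Γ) ∉ S) (hT1 : (1 : Δ) ∉ T)
    (hSgen : Subgroup.closure S = ⊤) (hTgen : Subgroup.closure T = ⊤) :
    borelChromaticNumber
        (cayleyAdj ((fun γ => Monoid.Coprod.inl γ) '' S ∪ (fun δ => Monoid.Coprod.inr δ) '' T :
          Set (Monoid.Coprod Γ Δ)) ℕ) ≤
      borelChromaticNumber (cayleyAdj S ℕ) * borelChromaticNumber (cayleyAdj T ℕ) := by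
  classical
  haveI hcΓ : Countable Γ := countable_of_fg S hSfin hSgen
  haveI hcΔ : Countable Δ := countable_of_fg T hTfin hTgen
  haveI hneΓ : Nonempty Γ := ⟨1⟩
  haveI hneΔ : Nonempty Δ := ⟨1⟩
  haveI hcΛ : Countable (Monoid.Coprod Γ Δ) := countable_coprod
  haveI hneΛ : Nonempty (Monoid.Coprod Γ Δ) := ⟨1⟩
  obtain ⟨eΓ, heΓ⟩ := exists_surjective_nat Γ
  obtain ⟨eΔ, heΔ⟩ := exists_surjective_nat Δ
  obtain ⟨eΛ, heΛ⟩ := exists_surjective_nat (Monoid.Coprod Γ Δ)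
  obtain ⟨πΓ, hπΓmeas, hπΓfree, hπΓequi⟩ :=
    exists_univ (Monoid.Coprod.inl : Γ →* Monoid.Coprod Γ Δ) eΓ eΛ
      Monoid.Coprod.inl_injective heΓ heΛ
  obtain ⟨πΔ, hπΔmeas, hπΔfree, hπΔequi⟩ :=
    exists_univ (Monoid.Coprod.inr : Δ →* Monoid.Coprod Γ Δ) eΔ eΛ
      Monoid.Coprod.inr_injective heΔ heΛ
  -- the defining sets for the chromatic numbers of the factors are nonempty
  have hnsΓ : {κ : Cardinal | ∃ (Y : Type) (mY : MeasurableSpace Y),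
      @StandardBorelSpace Y mY ∧ Cardinal.mk Y = κ ∧
      ∃ c : ↥(freePart Γ ℕ) → Y, Measurable c ∧
        ∀ x y, cayleyAdj S ℕ x y → c x ≠ c y}.Nonempty := by
    refine ⟨Cardinal.mk (Γ → ℕ), (Γ → ℕ), inferInstance, inferInstance, rfl,
      Subtype.val, measurable_subtype_coe, ?_⟩
    rintro x y ⟨γ, hγS, hcase⟩ hxy
    have hγ1 : γ ≠ 1 := fun hc => hS1 (hc ▸ hγS)
    rcases hcase with h | h
    · rw [hxy] at h
      exact y.2 γ hγ1 h
    · rw [← hxy] at h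
      exact x.2 γ hγ1 h
  have hnsΔ : {κ : Cardinal | ∃ (Y : Type) (mY : MeasurableSpace Y),
      @StandardBorelSpace Y mY ∧ Cardinal.mk Y = κ ∧
      ∃ c : ↥(freePart Δ ℕ) → Y, Measurable c ∧
        ∀ x y, cayleyAdj T ℕ x y → c x ≠ c y}.Nonempty := by
    refine ⟨Cardinal.mk (Δ → ℕ), (Δ → ℕ), inferInstance, inferInstance, rfl,
      Subtype.val, measurable_subtype_coe, ?_⟩
    rintro x y ⟨γ, hγT, hcase⟩ hxy
    have hγ1 : γ ≠ 1 := fun hc => hT1 (hc ▸ hγT)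
    rcases hcase with h | h
    · rw [hxy] at h
      exact y.2 γ hγ1 h
    · rw [← hxy] at h
      exact x.2 γ hγ1 h
  obtain ⟨Y, mY, hYsb, hYcard, cΓ, hcΓmeas, hcΓcol⟩ := csInf_mem hnsΓ
  obtain ⟨Z, mZ, hZsb, hZcard, cΔ, hcΔmeas, hcΔcol⟩ := csInf_mem hnsΔ
  letI := mY
  letI := mZ
  letI := hYsb
  letI := hZsb
  -- the product coloring
  set pΓ : ↥(freePart (Monoid.Coprod Γ Δ) ℕ) → ↥(freePart Γ ℕ) :=
    fun x => ⟨πΓ x, hπΓfree x⟩ with hpΓ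
  set pΔ : ↥(freePart (Monoid.Coprod Γ Δ) ℕ) → ↥(freePart Δ ℕ) :=
    fun x => ⟨πΔ x, hπΔfree x⟩ with hpΔ
  have hmember : (Cardinal.mk Y * Cardinal.mk Z) ∈ {κ : Cardinal |
      ∃ (W : Type) (mW : MeasurableSpace W), @StandardBorelSpace W mW ∧ Cardinal.mk W = κ ∧
      ∃ c : ↥(freePart (Monoid.Coprod Γ Δ) ℕ) → W, Measurable c ∧
        ∀ x y, cayleyAdj ((fun γ => Monoid.Coprod.inl γ) '' S ∪
          (fun δ => Monoid.Coprod.inr δ) '' T) ℕ x y → c x ≠ c y} := by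
    refine ⟨Y × Z, inferInstance, inferInstance, (Cardinal.mul_def Y Z).symm, fun x =>
      (cΓ (pΓ x), cΔ (pΔ x)), (hcΓmeas.comp (hπΓmeas.subtype_mk)).prodMk
        (hcΔmeas.comp (hπΔmeas.subtype_mk)), ?_⟩
    rintro x y ⟨g, hg, hcase⟩
    rcases hg with ⟨s, hsS, rfl⟩ | ⟨t, htT, rfl⟩
    · have hadj : cayleyAdj S ℕ (pΓ x) (pΓ y) := by
        rcases hcase with h | h
        · have hxy : act (Monoid.Coprod.inl : Γ →* Monoid.Coprod Γ Δ) s x = y :=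
            Subtype.ext h
          have he := hπΓequi s x
          rw [hxy] at he
          exact ⟨s, hsS, Or.inl he.symm⟩
        · have hxy : act (Monoid.Coprod.inl : Γ →* Monoid.Coprod Γ Δ) s y = x :=
            Subtype.ext h
          have he := hπΓequi s y
          rw [hxy] at he
          exact ⟨s, hsS, Or.inr he.symm⟩
      intro hc
      exact hcΓcol _ _ hadj (congrArg Prod.fst hc)
    · have hadj : cayleyAdj T ℕ (pΔ x) (pΔ y) := by
        rcases hcase with h | h
        · have hxy : act (Monoid.Coprod.inr : Δ →* Monoid.Coprod Γ Δ) t x = y :=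
            Subtype.ext h
          have he := hπΔequi t x
          rw [hxy] at he
          exact ⟨t, htT, Or.inl he.symm⟩
        · have hxy : act (Monoid.Coprod.inr : Δ →* Monoid.Coprod Γ Δ) t y = x :=
            Subtype.ext h
          have he := hπΔequi t y
          rw [hxy] at he
          exact ⟨t, htT, Or.inr he.symm⟩
      intro hc
      exact hcΔcol _ _ hadj (congrArg Prod.snd hc)
  have hle := csInf_le' hmember
  rw [hYcard, hZcard] at hle
  exact hle
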